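/- Fix C2 > 0 and m1, m2 ∈ ℝ, and set |m| = √(m1² + m2²). Every global minimizer l* > 0 of g(l) = l⁻⁴ · (9 + exp(2l(l − 2m2)/C2) + exp(2l(l + √3·m1 + m2)/C2) + exp(2l(l − √3·m1 + m2)/C2)) over (0,∞) satisfies the sharper lower bound l* > (1/2)·(−|m| + √(4·C2 + |m|²)). -/

import Mathlib

open Real

/-!
Each exponential term of `errVarC2` has the form `l⁻⁴ · exp (2 l (l + b) / C2)` with
`b ∈ {-2 m2, √3 m1 + m2, -√3 m1 + m2}`, and by Cauchy–Schwarz every such `b` is at most `2 |m|`.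
The derivative of such a term is `l⁻⁵ (2 l (2 l + b) / C2 - 4) exp (…)`, which is `≤ 0` as soon as
`l² + |m| l ≤ C2`, i.e. as soon as `l` is at most the positive root of `X² + |m| X - C2`. Together
with the term `9 l⁻⁴`, whose derivative is negative, the whole function has negative derivative
there, so no such `l` can be a minimizer.
-/

/-- The (rescaled) variance `S(l; C2)` of the error on the estimate of `C2`,
as a function of the edge length `l`. -/
noncomputable def errVarC2 (C2 m1 m2 l : ℝ) : ℝ :=
  (l ^ 4)⁻¹ * (9 + Real.exp (2 * l * (l - 2 * m2) / C2)
    + Real.exp (2 * l * (l + Real.sqrt 3 * m1 + m2) / C2)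
    + Real.exp (2 * l * (l - Real.sqrt 3 * m1 + m2) / C2))

lemma mul_add_mul_le_mul_sqrt {a c k : ℝ} (hk : 0 ≤ k) (h : a ^ 2 + c ^ 2 ≤ k ^ 2) (x y : ℝ) :
    a * x + c * y ≤ k * √(x ^ 2 + y ^ 2) := by
  have hxy : 0 ≤ x ^ 2 + y ^ 2 := by positivity
  have hsq : (a * x + c * y) ^ 2 ≤ k ^ 2 * (x ^ 2 + y ^ 2) := by
    nlinarith [sq_nonneg (a * y - c * x), mul_le_mul_of_nonneg_right h hxy]
  calc a * x + c * y ≤ |a * x + c * y| := le_abs_self _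
    _ ≤ √(k ^ 2 * (x ^ 2 + y ^ 2)) := Real.abs_le_sqrt hsq
    _ = k * √(x ^ 2 + y ^ 2) := by rw [Real.sqrt_mul (sq_nonneg k), Real.sqrt_sq hk]

lemma sq_add_mul_le_of_le_quadratic_root {C s l : ℝ} (hC : 0 ≤ C) (hl : 0 ≤ l)
    (h : l ≤ (1 / 2) * (-s + √(4 * C + s ^ 2))) : l ^ 2 + s * l ≤ C := by
  set t := √(4 * C + s ^ 2)
  have ht : t ^ 2 = 4 * C + s ^ 2 := Real.sq_sqrt (by positivity)
  have hts : |s| ≤ t := Real.abs_le_sqrt (by linarith)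
  have hprod : 0 ≤ ((t - s) / 2 - l) * ((t + s) / 2 + l) :=
    mul_nonneg (by linarith) (by linarith [neg_abs_le s])
  nlinarith

noncomputable def expTerm (C b l : ℝ) : ℝ :=
  (l ^ 4)⁻¹ * Real.exp (2 * l * (l + b) / C)

lemma errVarC2_eq (C2 m1 m2 : ℝ) :
    errVarC2 C2 m1 m2 = fun l => 9 * (l ^ 4)⁻¹ + expTerm C2 (-2 * m2) l
      + expTerm C2 (√3 * m1 + m2) l + expTerm C2 (-√3 * m1 + m2) l := by
  funext l
  simp only [errVarC2, expTerm]
  ring_nf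

lemma hasDerivAt_inv_pow_four {l : ℝ} (hl : l ≠ 0) :
    HasDerivAt (fun x : ℝ => (x ^ 4)⁻¹) (-4 * (l ^ 5)⁻¹) l :=
  ((hasDerivAt_pow 4 l).fun_inv (pow_ne_zero 4 hl)).congr_deriv (by field_simp; ring)

lemma hasDerivAt_expTerm (C b : ℝ) {l : ℝ} (hl : l ≠ 0) :
    HasDerivAt (expTerm C b)
      ((l ^ 5)⁻¹ * ((2 * l * (2 * l + b) / C - 4) * Real.exp (2 * l * (l + b) / C))) l := by
  have hexp : HasDerivAt (fun l => Real.exp (2 * l * (l + b) / C))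
      (Real.exp (2 * l * (l + b) / C) * ((2 * (l + b) + 2 * l) / C)) l := by
    have := ((((hasDerivAt_id l).const_mul 2).mul ((hasDerivAt_id l).add_const b)).div_const C).exp
    simpa using this
  refine ((hasDerivAt_inv_pow_four hl).mul hexp).congr_deriv ?_
  field_simp
  ring

lemma expTerm_deriv_nonpos {C b l : ℝ} (hC : 0 < C) (hl : 0 < l) (h : l * (2 * l + b) ≤ 2 * C) :
    (l ^ 5)⁻¹ * ((2 * l * (2 * l + b) / C - 4) * Real.exp (2 * l * (l + b) / C)) ≤ 0 := by
  have hfactor : 2 * l * (2 * l + b) / C - 4 ≤ 0 := by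
    rw [sub_nonpos, div_le_iff₀ hC]
    linarith
  exact mul_nonpos_of_nonneg_of_nonpos (by positivity)
    (mul_nonpos_of_nonpos_of_nonneg hfactor (Real.exp_pos _).le)

lemma errVarC2_hasDerivAt_neg {C2 m1 m2 l : ℝ} (hC2 : 0 < C2) (hl : 0 < l)
    (hquad : l ^ 2 + √(m1 ^ 2 + m2 ^ 2) * l ≤ C2) :
    ∃ d < 0, HasDerivAt (errVarC2 C2 m1 m2) d l := by
  have hb : ∀ a c : ℝ, a ^ 2 + c ^ 2 ≤ 2 ^ 2 → l * (2 * l + (a * m1 + c * m2)) ≤ 2 * C2 :=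
    fun a c hac => by nlinarith [mul_add_mul_le_mul_sqrt zero_le_two hac m1 m2]
  have hb₁ : l * (2 * l + -2 * m2) ≤ 2 * C2 := by simpa using hb 0 (-2) (by norm_num)
  have hb₂ : l * (2 * l + (√3 * m1 + m2)) ≤ 2 * C2 := by simpa using hb √3 1 (by norm_num)
  have hb₃ : l * (2 * l + (-√3 * m1 + m2)) ≤ 2 * C2 := by simpa using hb (-√3) 1 (by norm_num)
  rw [errVarC2_eq]
  refine ⟨_, ?_, ((((hasDerivAt_inv_pow_four hl.ne').const_mul 9).fun_add
    (hasDerivAt_expTerm C2 (-2 * m2) hl.ne')).fun_add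
    (hasDerivAt_expTerm C2 (√3 * m1 + m2) hl.ne')).fun_add
    (hasDerivAt_expTerm C2 (-√3 * m1 + m2) hl.ne')⟩
  have hpow_neg : 9 * (-4 * (l ^ 5)⁻¹) < 0 := by
    have : 0 < (l ^ 5)⁻¹ := by positivity
    linarith
  linarith [expTerm_deriv_nonpos hC2 hl hb₁, expTerm_deriv_nonpos hC2 hl hb₂,
    expTerm_deriv_nonpos hC2 hl hb₃]

/-- Every global minimizer `l*` of `S(·; C2)` on `(0,∞)` satisfies the sharper
lower bound `l* > (1/2)(−|m| + √(4C2 + |m|²))`. -/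
theorem errVarC2_minimizer_sharp_lower_bound (C2 m1 m2 lstar : ℝ) (hC2 : 0 < C2)
    (hlstar : 0 < lstar)
    (hmin : ∀ l : ℝ, 0 < l → errVarC2 C2 m1 m2 lstar ≤ errVarC2 C2 m1 m2 l) :
    (1 / 2) * (-Real.sqrt (m1 ^ 2 + m2 ^ 2) +
      Real.sqrt (4 * C2 + (Real.sqrt (m1 ^ 2 + m2 ^ 2)) ^ 2)) < lstar := by
  by_contra! hle
  obtain ⟨d, hd, hderiv⟩ := errVarC2_hasDerivAt_neg hC2 hlstar
    (sq_add_mul_le_of_le_quadratic_root hC2.le hlstar.le hle)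
  have hlocmin : IsLocalMin (errVarC2 C2 m1 m2) lstar :=
    Filter.mem_of_superset (Ioi_mem_nhds hlstar) hmin
  exact hd.ne (hlocmin.hasDerivAt_eq_zero hderiv)
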